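/- arXiv:2209.15482 — 3 statements merged into one kernel-verified Lean document; each statement's English description precedes it below -/
import Mathlib

section
/- Define a real sequence (α_n)_{n≥0} by α_0 = 1 and α_{n+1} = (2/(2n+3)) · ∑_{k=0}^{n} α_k α_{n-k}. Then for every real s with |s| < π/(2√2), the series ∑_{n=0}^{∞} α_n s^{2n+1} converges and its sum equals (1/√2) · tan(√2 · s). -/
/-!
Since `|α n| ≤ 1`, the odd series `g x = ∑ α n x ^ (2n+1)` converges for `|x| < 1`, and by the
Cauchy product the recurrence says exactly that `g' = 1 + 2 g²` with `g 0 = 0`. Then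
`arctan (√2 g x) - √2 x` has derivative zero, so `g x = tan (√2 x) / √2` on `(-1, 1)`.
To reach `|s| < π / (2√2)`, read the series as a complex power series of positive radius: it
agrees with the holomorphic function `tan (√2 z) / √2` at real points near `0`, so it is that
function's Taylor series at `0`, which converges on the whole disc on which `cos (√2 z) ≠ 0`.
-/

open Real Filter Metric Finset Topology

def SatisfiesTanRecurrence (α : ℕ → ℝ) : Prop :=
  α 0 = 1 ∧
    ∀ n : ℕ, α (n + 1) = (2 / (2 * (n : ℝ) + 3)) * ∑ k ∈ range (n + 1), α k * α (n - k)

theorem SatisfiesTanRecurrence.abs_le_one {α : ℕ → ℝ} (hα : SatisfiesTanRecurrence α) (n : ℕ) :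
    |α n| ≤ 1 := by
  induction n using Nat.strong_induction_on with
  | _ n ih =>
  cases n with
  | zero => simp [hα.1]
  | succ m =>
    have hsum : |∑ k ∈ range (m + 1), α k * α (m - k)| ≤ m + 1 :=
      calc _ ≤ ∑ k ∈ range (m + 1), |α k * α (m - k)| := abs_sum_le_sum_abs _ _
        _ ≤ ∑ k ∈ range (m + 1), (1 : ℝ) := sum_le_sum fun k hk => by
          have := mem_range.1 hk
          rw [abs_mul]
          exact mul_le_one₀ (ih k (by omega)) (abs_nonneg _) (ih (m - k) (by omega))
        _ = m + 1 := by simp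
    rw [hα.2, abs_mul, abs_of_pos (by positivity), div_mul_eq_mul_div,
      div_le_one (by positivity)]
    linarith

noncomputable def oddPowerSeries (a : ℕ → ℝ) (x : ℝ) : ℝ := ∑' n, a n * x ^ (2 * n + 1)

section OddPowerSeries

variable {a : ℕ → ℝ} {x : ℝ}

theorem summable_norm_oddPowerSeries (ha : ∀ n, |a n| ≤ 1) (hx : |x| < 1) :
    Summable fun n => ‖a n * x ^ (2 * n + 1)‖ := by
  refine (summable_geometric_of_lt_one (abs_nonneg x) hx).of_nonneg_of_le (fun _ => norm_nonneg _)
    fun n => ?_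
  rw [norm_mul, norm_pow, Real.norm_eq_abs]
  exact (mul_le_of_le_one_left (by positivity) (ha n)).trans
    (pow_le_pow_of_le_one (abs_nonneg x) hx.le (by omega))

theorem hasDerivAt_oddPowerSeries (ha : ∀ n, |a n| ≤ 1) (hx : |x| < 1) :
    HasDerivAt (oddPowerSeries a) (∑' n, a n * ((2 * n + 1) * x ^ (2 * n))) x := by
  obtain ⟨r, hxr, hr1⟩ := exists_between hx
  have hr0 : 0 ≤ r := (abs_nonneg x).trans hxr.le
  have hr : ‖r‖ < 1 := by rwa [Real.norm_of_nonneg hr0]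
  have hu : Summable fun n : ℕ => (2 * n + 1) * r ^ n := by
    have := (summable_pow_mul_geometric_of_norm_lt_one 1 hr).mul_left 2
    exact (this.add (summable_geometric_of_lt_one hr0 hr1)).congr fun n => by ring
  have hxI : x ∈ Set.Ioo (-r) r := abs_lt.1 hxr
  refine hasDerivAt_tsum_of_isPreconnected (g := fun n y => a n * y ^ (2 * n + 1))
    (g' := fun n y => a n * ((2 * n + 1) * y ^ (2 * n))) hu isOpen_Ioo isPreconnected_Ioo
    (fun n y _ => ?_) (fun n y hy => ?_) hxI ((summable_norm_oddPowerSeries ha hx).of_norm) hxI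
  · simpa using (hasDerivAt_pow (2 * n + 1) y).const_mul (a n)
  · have hy : |y| ≤ r := (abs_lt.2 hy).le
    simp only [norm_mul, norm_pow, Real.norm_eq_abs]
    rw [abs_of_nonneg (by positivity : (0 : ℝ) ≤ 2 * n + 1)]
    calc |a n| * ((2 * n + 1) * |y| ^ (2 * n)) ≤ 1 * ((2 * n + 1) * r ^ n) := by
          gcongr
          · exact ha n
          · calc |y| ^ (2 * n) ≤ r ^ (2 * n) := by gcongr
              _ ≤ r ^ n := pow_le_pow_of_le_one hr0 hr1.le (by omega)
      _ = (2 * n + 1) * r ^ n := one_mul _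

theorem hasSum_oddPowerSeries_sq (ha : ∀ n, |a n| ≤ 1) (hx : |x| < 1) :
    HasSum (fun n => (∑ k ∈ range (n + 1), a k * a (n - k)) * x ^ (2 * n + 2))
      (oddPowerSeries a x ^ 2) := by
  have hF := summable_norm_oddPowerSeries ha hx
  rw [sq]
  refine (hasSum_sum_range_mul_of_summable_norm hF hF).congr_fun fun n => ?_
  rw [sum_mul]
  refine sum_congr rfl fun k hk => ?_
  have : 2 * n + 2 = (2 * k + 1) + (2 * (n - k) + 1) := by have := mem_range.1 hk; omega
  rw [this, pow_add]
  ring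

end OddPowerSeries

theorem SatisfiesTanRecurrence.hasDerivAt_oddPowerSeries {α : ℕ → ℝ}
    (hα : SatisfiesTanRecurrence α) {x : ℝ} (hx : |x| < 1) :
    HasDerivAt (oddPowerSeries α) (1 + 2 * oddPowerSeries α x ^ 2) x := by
  suffices HasSum (fun n => α n * ((2 * n + 1) * x ^ (2 * n))) (1 + 2 * oddPowerSeries α x ^ 2) by
    simpa only [this.tsum_eq] using _root_.hasDerivAt_oddPowerSeries hα.abs_le_one hx
  have htail : HasSum (fun n => α (n + 1) * ((2 * ↑(n + 1) + 1) * x ^ (2 * (n + 1))))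
      (2 * oddPowerSeries α x ^ 2) :=
    ((hasSum_oddPowerSeries_sq hα.abs_le_one hx).mul_left 2).congr_fun fun n => by
      rw [hα.2 n]
      field_simp
      push_cast
      ring
  have := (hasSum_nat_add_iff (f := fun n : ℕ => α n * ((2 * n + 1) * x ^ (2 * n))) 1).1 htail
  rwa [sum_range_one, Nat.cast_zero, hα.1, mul_zero, zero_add, pow_zero, mul_one, one_mul,
    add_comm] at this

theorem mul_eq_tan_mul_of_hasDerivAt {g : ℝ → ℝ} {s : Set ℝ} {c x : ℝ} (hs : IsOpen s)
    (hs' : IsPreconnected s) (h0s : 0 ∈ s) (hg : ∀ y ∈ s, HasDerivAt g (1 + c ^ 2 * g y ^ 2) y)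
    (hg0 : g 0 = 0) (hx : x ∈ s) : c * g x = tan (c * x) := by
  have hderiv : ∀ y ∈ s, HasDerivAt (fun y => arctan (c * g y) - c * y) 0 y := by
    intro y hy
    have h := ((hg y hy).const_mul c).arctan.sub ((hasDerivAt_id y).const_mul c)
    have : 1 / (1 + (c * g y) ^ 2) * (c * (1 + c ^ 2 * g y ^ 2)) - c * 1 = 0 := by
      field_simp
      ring
    rwa [this] at h
  have hconst := hs.is_const_of_deriv_eq_zero hs'
    (fun y hy => (hderiv y hy).differentiableAt.differentiableWithinAt)
    (fun y hy => (hderiv y hy).deriv) hx h0s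
  simp only [hg0, mul_zero, arctan_zero, sub_zero, sub_eq_zero] at hconst
  rw [← hconst, tan_arctan]

theorem SatisfiesTanRecurrence.hasSum_tan {α : ℕ → ℝ} (hα : SatisfiesTanRecurrence α) {x : ℝ}
    (hx : |x| < 1) : HasSum (fun n => α n * x ^ (2 * n + 1)) (1 / √2 * tan (√2 * x)) := by
  have hsum := (summable_norm_oddPowerSeries hα.abs_le_one hx).of_norm.hasSum
  have hg0 : oddPowerSeries α 0 = 0 := by simp [oddPowerSeries]
  have htan := mul_eq_tan_mul_of_hasDerivAt (c := √2) isOpen_Ioo isPreconnected_Ioo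
    (by norm_num : (0 : ℝ) ∈ Set.Ioo (-1) 1)
    (fun y hy => by simpa using hα.hasDerivAt_oddPowerSeries (abs_lt.2 hy)) hg0 (abs_lt.1 hx)
  rwa [← htan, one_div, inv_mul_cancel_left₀ (by positivity)]

theorem Complex.cos_ne_zero_of_norm_lt_pi_div_two {z : ℂ} (hz : ‖z‖ < π / 2) :
    Complex.cos z ≠ 0 := by
  refine Complex.cos_ne_zero_iff.2 fun k hk => hz.not_ge ?_
  have hk1 : (1 : ℝ) ≤ |2 * (k : ℝ) + 1| := by
    exact_mod_cast Int.one_le_abs (by omega : 2 * k + 1 ≠ 0)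
  rw [hk, show (2 * (k : ℂ) + 1) * π / 2 = ((2 * k + 1 : ℝ) * (π / 2) : ℝ) by push_cast; ring,
    Complex.norm_real, Real.norm_eq_abs, abs_mul, abs_of_pos (by positivity : 0 < π / 2)]
  exact le_mul_of_one_le_left (by positivity) hk1

theorem Complex.differentiableOn_tan_const_mul (c : ℂ) :
    DifferentiableOn ℂ (fun z => Complex.tan (c * z)) (ball 0 (π / (2 * ‖c‖))) := by
  intro z hz
  rw [mem_ball_zero_iff] at hz
  have hc : 0 < ‖c‖ := by
    by_contra! h
    rw [le_antisymm h (norm_nonneg c), mul_zero, div_zero] at hz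
    exact (norm_nonneg z).not_gt hz
  have hcz : ‖c * z‖ < π / 2 := by
    rw [norm_mul]
    rw [lt_div_iff₀ (by positivity)] at hz
    linarith
  exact ((Complex.differentiableAt_tan.2 (Complex.cos_ne_zero_of_norm_lt_pi_div_two hcz)).comp z
    (differentiableAt_id.const_mul c)).differentiableWithinAt

theorem Complex.frequently_nhdsNE_zero_of_eventually_real {p : ℂ → Prop}
    (h : ∀ᶠ x : ℝ in 𝓝 0, p x) : ∃ᶠ z in 𝓝[≠] (0 : ℂ), p z := by
  have hreal : Tendsto ((↑) : ℝ → ℂ) (𝓝[≠] 0) (𝓝[≠] 0) :=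
    tendsto_nhdsWithin_of_tendsto_nhds_of_eventually_within _
      ((Complex.continuous_ofReal.tendsto' 0 0 Complex.ofReal_zero).mono_left nhdsWithin_le_nhds)
      (eventually_nhdsWithin_of_forall fun x hx => by simpa using hx)
  exact hreal.frequently (h.filter_mono nhdsWithin_le_nhds).frequently

theorem hasSum_ofScalars_of_differentiableOn {f : ℂ → ℂ} {c : ℕ → ℂ} {R : ℝ}
    (hc : 0 < (FormalMultilinearSeries.ofScalars ℂ c).radius)
    (hf : DifferentiableOn ℂ f (ball 0 R))
    (hfreq : ∃ᶠ z in 𝓝[≠] 0, HasSum (fun n => c n * z ^ n) (f z)) {z : ℂ} (hz : z ∈ ball 0 R) :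
    HasSum (fun n => c n * z ^ n) (f z) := by
  set p := FormalMultilinearSeries.ofScalars ℂ c
  have hp := p.hasFPowerSeriesOnBall hc
  have hterm : ∀ w : ℂ, (fun n => p n fun _ => w) = fun n => c n * w ^ n := fun w => by
    ext n; simp [p, mul_comm]
  have hfa : AnalyticAt ℂ f 0 := hf.analyticAt (ball_mem_nhds 0 (pos_of_mem_ball hz))
  have hpf : p.sum =ᶠ[𝓝 0] f := (hp.analyticAt.frequently_eq_iff_eventually_eq hfa).1 <|
    hfreq.mono fun w hw => by rw [FormalMultilinearSeries.sum, hterm, hw.tsum_eq]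
  obtain ⟨r, hzr, hrR⟩ := exists_between (mem_ball_zero_iff.1 hz)
  lift r to NNReal using (norm_nonneg z).trans hzr.le
  have hball := (hf.mono (closedBall_subset_ball hrR)).hasFPowerSeriesOnBall
    ((norm_nonneg z).trans_lt hzr)
  rw [hball.hasFPowerSeriesAt.eq_formalMultilinearSeries (hp.hasFPowerSeriesAt.congr hpf)] at hball
  have hzr' : z ∈ eball 0 r :=
    mem_eball_zero_iff.2 (by simpa [enorm, ← NNReal.coe_lt_coe] using hzr)
  simpa only [zero_add, hterm] using hball.hasSum hzr'

theorem hasSum_extend_mul_pow_iff {R : Type*} [Semiring R] [TopologicalSpace R] {g : ℕ → ℕ}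
    (hg : Function.Injective g) (a : ℕ → R) (z s : R) :
    HasSum (fun n => Function.extend g a 0 n * z ^ n) s ↔ HasSum (fun m => a m * z ^ g m) s := by
  refine Iff.trans (Eq.to_iff (congrArg (HasSum · s) (funext fun n => ?_)))
    (hasSum_extend_zero hg)
  by_cases h : ∃ m, g m = n
  · obtain ⟨m, rfl⟩ := h
    simp only [hg.extend_apply]
  · simp only [Function.extend_apply' _ _ _ h, Pi.zero_apply, zero_mul]

theorem one_le_radius_ofScalars_extend {g : ℕ → ℕ} (hg : Function.Injective g) {a : ℕ → ℂ}
    (ha : ∀ m, ‖a m‖ ≤ 1) :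
    1 ≤ (FormalMultilinearSeries.ofScalars ℂ (Function.extend g a 0)).radius := by
  have hc : ∀ n, ‖Function.extend g a 0 n‖ ≤ 1 := fun n => by
    by_cases h : ∃ m, g m = n
    · obtain ⟨m, rfl⟩ := h
      simpa [hg.extend_apply] using ha m
    · simp [Function.extend_apply' _ _ _ h]
  simpa using FormalMultilinearSeries.le_radius_of_bound _ 1 (r := 1) fun n => by
    simpa [FormalMultilinearSeries.ofScalars_norm] using hc n

theorem adomian_series_tan (α : ℕ → ℝ) (h0 : α 0 = 1)
    (hrec : ∀ n : ℕ, α (n + 1)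
      = (2 / (2 * (n : ℝ) + 3)) * ∑ k ∈ Finset.range (n + 1), α k * α (n - k))
    (s : ℝ) (hs : |s| < π / (2 * Real.sqrt 2)) :
    HasSum (fun n : ℕ => α n * s ^ (2 * n + 1))
      ((1 / Real.sqrt 2) * Real.tan (Real.sqrt 2 * s)) := by
  have hα : SatisfiesTanRecurrence α := ⟨h0, hrec⟩
  have hodd : Function.Injective fun m : ℕ => 2 * m + 1 := fun m k h => by simpa using h
  -- `c (2 * m + 1) = α m` and `c` vanishes at even indices
  set c : ℕ → ℂ := Function.extend (fun m => 2 * m + 1) (fun m => (α m : ℂ)) 0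
  have hrad : 0 < (FormalMultilinearSeries.ofScalars ℂ c).radius :=
    zero_lt_one.trans_le <| one_le_radius_ofScalars_extend hodd fun m => by
      simpa using hα.abs_le_one m
  have hreal : ∀ᶠ x : ℝ in 𝓝 0, HasSum (fun n => c n * (x : ℂ) ^ n)
      (1 / √2 * Complex.tan (√2 * x)) := by
    filter_upwards [ball_mem_nhds (0 : ℝ) one_pos] with x hx
    rw [hasSum_extend_mul_pow_iff hodd]
    exact_mod_cast Complex.hasSum_ofReal.2 (hα.hasSum_tan (by simpa using hx))
  have hf : DifferentiableOn ℂ (fun z : ℂ => 1 / (√2 : ℂ) * Complex.tan (√2 * z))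
      (ball 0 (π / (2 * √2))) := by
    have := (Complex.differentiableOn_tan_const_mul √2).const_mul (1 / (√2 : ℂ))
    rwa [Complex.norm_real, Real.norm_of_nonneg (sqrt_nonneg 2)] at this
  have := hasSum_ofScalars_of_differentiableOn hrad hf
    (Complex.frequently_nhdsNE_zero_of_eventually_real hreal) (z := s)
    (mem_ball_zero_iff.2 (by simpa using hs))
  rw [hasSum_extend_mul_pow_iff hodd] at this
  exact_mod_cast this
end

section
/- Define ζ(s) = (1/(1−i)) · tan((1+i)s) for complex s, where tan is the complex tangent. Then ζ(0) = 0, and at every real s the function ζ (restricted to the real line) is differentiable with derivative ζ′(s) = i + 2 ζ(s)². (The complex cosine cos((1+i)s) is nonzero for all real s, so ζ is well defined on ℝ.) -/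
/-! `tan` solves the Riccati equation `tan' = 1 + tan²`, and rescaling `s ↦ c · tan (a s)` turns it
into `ζ' = c a + (a / c) ζ²`. With `a = 1 + i` and `c = 1 / (1 - i)` one has `c a = i` and `a / c = 2`.
The zeros of `cos` are real and nonzero, so `cos ((1 + i) s)` never vanishes. -/

open Complex

theorem Complex.im_eq_zero_of_cos_eq_zero {z : ℂ} (h : cos z = 0) : z.im = 0 := by
  obtain ⟨k, rfl⟩ := cos_eq_zero_iff.1 h
  norm_cast

theorem Complex.cos_one_add_I_mul_ofReal_ne_zero (s : ℝ) : cos ((1 + I) * s) ≠ 0 := by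
  intro h
  have hs : s = 0 := by simpa using im_eq_zero_of_cos_eq_zero h
  simp [hs] at h

theorem Complex.hasDerivAt_tan_one_add_sq {z : ℂ} (h : cos z ≠ 0) :
    HasDerivAt tan (1 + tan z ^ 2) z := by
  simpa only [one_div, ← inv_one_add_tan_sq h, inv_inv] using hasDerivAt_tan h

theorem Complex.hasDerivAt_const_mul_tan_mul_ofReal {a c : ℂ} (hc : c ≠ 0) {s : ℝ}
    (h : cos (a * s) ≠ 0) :
    HasDerivAt (fun t : ℝ => c * tan (a * t))
      (c * a + a / c * (c * tan (a * s)) ^ 2) s := by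
  have hlin : HasDerivAt (fun t : ℝ => a * t) a s := by
    simpa using ((hasDerivAt_id (s : ℂ)).const_mul a).comp_ofReal
  refine (((hasDerivAt_tan_one_add_sq h).comp s hlin).const_mul c).congr_deriv ?_
  field_simp

theorem complex_tan_riccati (ζ : ℝ → ℂ)
    (hζ : ∀ s : ℝ, ζ s = (1 / (1 - Complex.I)) * Complex.tan ((1 + Complex.I) * s)) :
    ζ 0 = 0 ∧
    (∀ s : ℝ, Complex.cos ((1 + Complex.I) * s) ≠ 0) ∧
    ∀ s : ℝ, HasDerivAt ζ (Complex.I + 2 * ζ s ^ 2) s := by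
  have h1I : (1 : ℂ) - I ≠ 0 := fun h => by simpa using congrArg im h
  have hscale : 1 / (1 - I) * (1 + I) = I := by
    field_simp
    linear_combination I_sq
  have hratio : (1 + I) / (1 / (1 - I)) = 2 := by
    field_simp
    linear_combination -I_sq
  refine ⟨by simp [hζ], cos_one_add_I_mul_ofReal_ne_zero, fun s => ?_⟩
  rw [hζ s, funext hζ]
  refine (hasDerivAt_const_mul_tan_mul_ofReal (one_div_ne_zero h1I)
    (cos_one_add_I_mul_ofReal_ne_zero s)).congr_deriv ?_
  rw [hscale, hratio]
end

section
/- Define the complex sequence (γ_n)_{n≥0} by γ_0 = i and γ_{n+1} = (2/(2n+3)) ∑_{k=0}^{n} γ_k γ_{n-k}. Then for every real s with |s| < π/(2√2), the series ∑_{n=0}^{∞} γ_n s^{2n+1} converges in ℂ and its sum ζ satisfies the identity ζ = (1/(1−i)) · tan((1+i)s); moreover, writing γ_n = α_n + i β_n with α_n, β_n real, the sequences satisfy α_0 = 0, β_0 = 1, α_{n+1} = (2/(2n+3)) ∑_{k=0}^{n} (α_k α_{n-k} − β_k β_{n-k}) and β_{n+1} = (4/(2n+3)) ∑_{k=0}^{n}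 α_k β_{n-k}. -/
open Real

/-!
The function `ζ(z) = tan((1 + i) z) / (1 - i)` is holomorphic on the disc `‖z‖ < π / (2√2)`,
where `‖(1 + i) z‖ < π / 2` keeps `cos((1 + i) z)` away from zero, and it solves the Riccati
equation `ζ' = i + 2 ζ²`, because `tan' = 1 + tan²`, `(1 + i) / (1 - i) = i` and
`2 / (1 - i)² = i`. By the Leibniz rule, its Taylor coefficients at `0` satisfy
`(n + 1) c (n + 1) = [n = 0] i + 2 ∑ c k * c (n - k)`; together with `c 0 = 0` this forces
`c (2n) = 0` and `c (2n + 1) = γ n`, so `∑ γ n z^(2n+1)` is the Taylor series of `ζ`.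
The real recurrences are the real and imaginary parts of the complex one, the latter using the
symmetry `k ↔ n - k` of the convolution.
-/

open Complex Finset Nat Filter Topology
open scoped ContDiff

section TaylorCoeff

variable {𝕜 : Type*} [NontriviallyNormedField 𝕜]

noncomputable def taylorCoeff (f : 𝕜 → 𝕜) (x : 𝕜) (n : ℕ) : 𝕜 :=
  (n ! : 𝕜)⁻¹ * iteratedDeriv n f x

lemma iteratedDeriv_succ_of_riccati {f : 𝕜 → 𝕜} {x a b : 𝕜} (hf : ContDiffAt 𝕜 ∞ f x)
    (hode : deriv f =ᶠ[𝓝 x] fun z => a + b * f z ^ 2) (n : ℕ) :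
    iteratedDeriv (n + 1) f x = (if n = 0 then a else 0) + b * ∑ k ∈ range (n + 1),
      n.choose k * iteratedDeriv k f x * iteratedDeriv (n - k) f x := by
  have hfn : ContDiffAt 𝕜 n f x := hf.of_le (by exact_mod_cast le_top)
  simp only [iteratedDeriv_succ', hode.iteratedDeriv_eq n, sq]
  rw [iteratedDeriv_fun_add contDiffAt_const (contDiffAt_const.mul (hfn.mul hfn)),
    iteratedDeriv_const, iteratedDeriv_const_mul_field, iteratedDeriv_fun_mul hfn hfn]

variable [CharZero 𝕜]

lemma taylorCoeff_succ_of_riccati {f : 𝕜 → 𝕜} {x a b : 𝕜} (hf : ContDiffAt 𝕜 ∞ f x)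
    (hode : deriv f =ᶠ[𝓝 x] fun z => a + b * f z ^ 2) (n : ℕ) :
    (n + 1 : 𝕜) * taylorCoeff f x (n + 1) = (if n = 0 then a else 0) +
      b * ∑ k ∈ range (n + 1), taylorCoeff f x k * taylorCoeff f x (n - k) := by
  have hfac : ∀ m : ℕ, (m ! : 𝕜) ≠ 0 := fun m => by exact_mod_cast m.factorial_ne_zero
  have hterm : ∀ k ∈ range (n + 1), (n ! : 𝕜)⁻¹ *
      (n.choose k * iteratedDeriv k f x * iteratedDeriv (n - k) f x) =
      taylorCoeff f x k * taylorCoeff f x (n - k) := by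
    intro k hk
    have hkn : k ≤ n := Nat.lt_succ_iff.mp (mem_range.mp hk)
    have hchoose : (n.choose k * k ! * (n - k)! : 𝕜) = n ! := by
      exact_mod_cast Nat.choose_mul_factorial_mul_factorial hkn
    have hchoose_ne : (n.choose k : 𝕜) ≠ 0 := by exact_mod_cast (Nat.choose_pos hkn).ne'
    rw [taylorCoeff, taylorCoeff, ← hchoose]
    field_simp [hfac k, hfac (n - k)]
  calc (n + 1 : 𝕜) * taylorCoeff f x (n + 1)
      = (n ! : 𝕜)⁻¹ * iteratedDeriv (n + 1) f x := by
        rw [taylorCoeff, Nat.factorial_succ]; push_cast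
        field_simp [hfac n]
    _ = _ := by
        rw [iteratedDeriv_succ_of_riccati hf hode, mul_add, mul_sum, ← sum_congr rfl hterm,
          mul_sum, mul_sum]
        congr 1
        · split_ifs with hn <;> simp [hn]
        · exact sum_congr rfl fun k _ => by ring

end TaylorCoeff

lemma Complex.hasSum_taylorCoeff_on_ball {f : ℂ → ℂ} {c z : ℂ} {r : ℝ}
    (hf : DifferentiableOn ℂ f (Metric.ball c r)) (hz : z ∈ Metric.ball c r) :
    HasSum (fun n => taylorCoeff f c n * (z - c) ^ n) (f z) := by
  simpa only [taylorCoeff, smul_eq_mul, mul_assoc, mul_comm ((z - c) ^ _)] using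
    hasSum_taylorSeries_on_ball hf hz

lemma Finset.sum_range_two_mul {M : Type*} [AddCommMonoid M] (f : ℕ → M) (N : ℕ) :
    ∑ k ∈ range (2 * N), f k = ∑ j ∈ range N, (f (2 * j) + f (2 * j + 1)) := by
  induction N with
  | zero => simp
  | succ N ih => rw [Nat.mul_succ, sum_range_succ, sum_range_succ, sum_range_succ, ih, add_assoc]

section RiccatiCoeff

variable {K : Type*} [Field K] [CharZero K]

lemma riccati_coeff_even_eq_zero {c : ℕ → K} {a b : K} (hc0 : c 0 = 0)
    (hc : ∀ n : ℕ, (n + 1 : K) * c (n + 1) = (if n = 0 then a else 0) +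
      b * ∑ k ∈ range (n + 1), c k * c (n - k)) (n : ℕ) :
    c (2 * n) = 0 := by
  induction n using Nat.strong_induction_on with
  | _ n ih =>
    rcases n with _ | m
    · exact hc0
    have hsum : ∑ k ∈ range (2 * m + 2), c k * c (2 * m + 1 - k) = 0 := by
      refine sum_eq_zero fun k hk => ?_
      rw [mem_range] at hk
      rcases Nat.even_or_odd' k with ⟨j, rfl | rfl⟩
      · rw [ih j (by omega), zero_mul]
      · rw [show 2 * m + 1 - (2 * j + 1) = 2 * (m - j) by omega, ih (m - j) (by omega), mul_zero]
    have h := hc (2 * m + 1)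
    rw [if_neg (by omega), hsum, mul_zero, zero_add] at h
    have hne : ((2 * m + 1 : ℕ) + 1 : K) ≠ 0 := by exact_mod_cast (2 * m + 1).succ_ne_zero
    exact (mul_eq_zero.mp h).resolve_left hne

lemma riccati_coeff_odd_eq {c γ : ℕ → K} {a b : K} (hc0 : c 0 = 0)
    (hc : ∀ n : ℕ, (n + 1 : K) * c (n + 1) = (if n = 0 then a else 0) +
      b * ∑ k ∈ range (n + 1), c k * c (n - k))
    (hγ0 : γ 0 = a)
    (hγ : ∀ n : ℕ, γ (n + 1) = b / (2 * n + 3) * ∑ k ∈ range (n + 1), γ k * γ (n - k))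
    (n : ℕ) : c (2 * n + 1) = γ n := by
  have heven := riccati_coeff_even_eq_zero hc0 hc
  induction n using Nat.strong_induction_on with
  | _ n ih =>
    rcases n with _ | m
    · simpa [hc0, hγ0] using hc 0
    have hsum : ∑ k ∈ range (2 * m + 2 + 1), c k * c (2 * m + 2 - k) =
        ∑ j ∈ range (m + 1), γ j * γ (m - j) := by
      rw [sum_range_succ, show 2 * m + 2 = 2 * (m + 1) by ring, heven, zero_mul, add_zero,
        sum_range_two_mul]
      refine sum_congr rfl fun j hj => ?_
      rw [mem_range] at hj
      rw [heven, zero_mul, zero_add, ih j (by omega),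
        show 2 * (m + 1) - (2 * j + 1) = 2 * (m - j) + 1 by omega, ih (m - j) (by omega)]
    have h := hc (2 * m + 2)
    rw [if_neg (by omega), zero_add, hsum] at h
    have hne : (2 * m + 3 : K) ≠ 0 := by exact_mod_cast (2 * m + 2).succ_ne_zero
    rw [hγ m, show 2 * (m + 1) + 1 = 2 * m + 2 + 1 by ring]
    field_simp
    push_cast at h
    linear_combination h

end RiccatiCoeff

lemma hasSum_odd_iff_of_even_eq_zero {M : Type*} [AddCommMonoid M] [TopologicalSpace M]
    {f : ℕ → M} {s : M} (hf : ∀ n, f (2 * n) = 0) :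
    HasSum (fun n => f (2 * n + 1)) s ↔ HasSum f s := by
  refine Function.Injective.hasSum_iff (g := fun n => 2 * n + 1) (fun m n h => by simpa using h) ?_
  rintro k hk
  obtain ⟨j, rfl | rfl⟩ := Nat.even_or_odd' k
  · exact hf j
  · exact absurd ⟨j, rfl⟩ hk

lemma Complex.re_sum_range_mul_sub (z : ℕ → ℂ) (n : ℕ) :
    (∑ k ∈ range (n + 1), z k * z (n - k)).re =
      ∑ k ∈ range (n + 1), ((z k).re * (z (n - k)).re - (z k).im * (z (n - k)).im) := by
  simp only [re_sum, mul_re]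

lemma Complex.im_sum_range_mul_sub (z : ℕ → ℂ) (n : ℕ) :
    (∑ k ∈ range (n + 1), z k * z (n - k)).im =
      2 * ∑ k ∈ range (n + 1), (z k).re * (z (n - k)).im := by
  have hreflect : ∑ k ∈ range (n + 1), (z k).im * (z (n - k)).re =
      ∑ k ∈ range (n + 1), (z k).re * (z (n - k)).im := by
    rw [← sum_range_reflect]
    refine sum_congr rfl fun k hk => ?_
    rw [show n + 1 - 1 - k = n - k by omega, show n - (n - k) = k by
      have := mem_range.mp hk; omega, mul_comm]
  simp only [im_sum, mul_im, sum_add_distrib, hreflect]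
  ring

lemma Complex.cos_ne_zero_of_norm_lt {w : ℂ} (hw : ‖w‖ < π / 2) : cos w ≠ 0 := by
  intro hcos
  obtain ⟨k, rfl⟩ := cos_eq_zero_iff.mp hcos
  have hk : (1 : ℝ) ≤ |2 * (k : ℝ) + 1| := by
    exact_mod_cast Int.one_le_abs (show 2 * k + 1 ≠ 0 by omega)
  have hnorm : ‖(2 * (k : ℂ) + 1) * π / 2‖ = |2 * (k : ℝ) + 1| * π / 2 := by
    rw [show (2 * (k : ℂ) + 1) * π / 2 = (((2 * k + 1) * π / 2 : ℝ) : ℂ) by push_cast; ring,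
      norm_real, norm_eq_abs, abs_div, abs_mul, abs_of_pos pi_pos, abs_two]
  nlinarith [pi_pos]

lemma Complex.norm_one_add_I_mul (z : ℂ) : ‖(1 + I) * z‖ = √2 * ‖z‖ := by
  rw [norm_mul, norm_def, normSq_apply]
  norm_num

lemma Complex.cos_one_add_I_mul_ne_zero {z : ℂ} (hz : ‖z‖ < π / (2 * √2)) :
    cos ((1 + I) * z) ≠ 0 := by
  refine cos_ne_zero_of_norm_lt ?_
  rw [norm_one_add_I_mul, lt_div_iff₀ (by positivity)] at *
  nlinarith [sq_sqrt (zero_le_two : (0 : ℝ) ≤ 2)]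

noncomputable def scaledTan (z : ℂ) : ℂ := 1 / (1 - I) * tan ((1 + I) * z)

lemma hasDerivAt_scaledTan {z : ℂ} (hz : cos ((1 + I) * z) ≠ 0) :
    HasDerivAt scaledTan (I + 2 * scaledTan z ^ 2) z := by
  have hlin : HasDerivAt (fun z : ℂ => (1 + I) * z) (1 + I) z := by
    simpa using (hasDerivAt_id z).const_mul (1 + I)
  refine (((hasDerivAt_tan hz).comp z hlin).const_mul (1 / (1 - I))).congr_deriv ?_
  have h1I : (1 - I : ℂ) ≠ 0 := by
    intro h; simpa using congrArg im h
  have hsc := sin_sq_add_cos_sq ((1 + I) * z)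
  rw [scaledTan, Complex.tan_eq_sin_div_cos]
  field_simp
  linear_combination
    (-2 : ℂ) * hsc + (2 * cos ((1 + I) * z) ^ 2 - I * cos ((1 + I) * z) ^ 2 - 1) * I_sq

lemma contDiffAt_scaledTan : ContDiffAt ℂ ∞ scaledTan 0 :=
  contDiffAt_const.mul <|
    (Complex.contDiffAt_tan.mpr (by simp)).comp 0 (contDiffAt_const.mul contDiffAt_id)

lemma differentiableOn_scaledTan :
    DifferentiableOn ℂ scaledTan (Metric.ball 0 (π / (2 * √2))) :=
  fun _ hz => (hasDerivAt_scaledTan (cos_one_add_I_mul_ne_zero (mem_ball_zero_iff.mp hz)))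
    |>.differentiableAt.differentiableWithinAt

lemma deriv_scaledTan_eventuallyEq :
    deriv scaledTan =ᶠ[𝓝 0] fun z => I + 2 * scaledTan z ^ 2 := by
  filter_upwards [Metric.ball_mem_nhds 0 (by positivity : 0 < π / (2 * √2))] with z hz
  exact (hasDerivAt_scaledTan (cos_one_add_I_mul_ne_zero (mem_ball_zero_iff.mp hz))).deriv

theorem adomian_complex_sequence_tan (γ : ℕ → ℂ) (h0 : γ 0 = Complex.I)
    (hrec : ∀ n : ℕ, γ (n + 1) = (2 / (2 * (n : ℂ) + 3))
      * ∑ k ∈ Finset.range (n + 1), γ k * γ (n - k)) :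
    (∀ s : ℝ, |s| < π / (2 * Real.sqrt 2) →
      HasSum (fun n : ℕ => γ n * (s : ℂ) ^ (2 * n + 1))
        ((1 / (1 - Complex.I)) * Complex.tan ((1 + Complex.I) * s))) ∧
    (γ 0).re = 0 ∧ (γ 0).im = 1 ∧
    (∀ n : ℕ, (γ (n + 1)).re = (2 / (2 * (n : ℝ) + 3))
      * ∑ k ∈ Finset.range (n + 1),
          ((γ k).re * (γ (n - k)).re - (γ k).im * (γ (n - k)).im)) ∧
    (∀ n : ℕ, (γ (n + 1)).im = (4 / (2 * (n : ℝ) + 3))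
      * ∑ k ∈ Finset.range (n + 1), (γ k).re * (γ (n - k)).im) := by
  have hc := taylorCoeff_succ_of_riccati contDiffAt_scaledTan deriv_scaledTan_eventuallyEq
  have hc0 : taylorCoeff scaledTan 0 0 = 0 := by simp [taylorCoeff, scaledTan]
  have hreal : ∀ n : ℕ, (2 / (2 * (n : ℂ) + 3)) = ((2 / (2 * n + 3) : ℝ) : ℂ) := by
    intro n; push_cast; ring
  refine ⟨fun s hs => ?_, by simp [h0], by simp [h0], fun n => ?_, fun n => ?_⟩
  · have hs' : (s : ℂ) ∈ Metric.ball 0 (π / (2 * √2)) := by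
      rwa [mem_ball_zero_iff, norm_real, norm_eq_abs]
    have hT := hasSum_taylorCoeff_on_ball differentiableOn_scaledTan hs'
    simp only [sub_zero] at hT
    rw [← hasSum_odd_iff_of_even_eq_zero fun n => by
      rw [riccati_coeff_even_eq_zero hc0 hc n, zero_mul]] at hT
    simpa only [riccati_coeff_odd_eq hc0 hc h0 hrec, scaledTan] using hT
  · rw [hrec n, hreal n, re_ofReal_mul, re_sum_range_mul_sub]
  · rw [hrec n, hreal n, im_ofReal_mul, im_sum_range_mul_sub]
    ring
end
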